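/- Let d ≥ 2 be an even natural number and let c = 3l for some l ∈ ℕ, l ≥ 1. Then for every K₀ ∈ ℕ there exists a hypergraph H with disc(H, c) ≥ K₀ and disc(Δ^d H, c) ≥ (1/6) · disc(H, c)². -/

import Mathlib

/-- The Stirling numbers of the second kind: `stirling2 d k` is the number of
partitions of a `d`-element set into `k` nonempty parts. -/
def stirling2 : ℕ → ℕ → ℕ
  | 0, 0 => 1
  | 0, _ + 1 => 0
  | _ + 1, 0 => 0
  | d + 1, k + 1 => (k + 1) * stirling2 d (k + 1) + stirling2 d k

/-- The discrepancy of a `c`-coloring `χ` of the hypergraph with edge set `H`. -/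
noncomputable def discCol {V : Type} (H : Finset (Finset V)) (c : ℕ) (χ : V → Fin c) : ℝ :=
  ⨆ E ∈ H, ⨆ i : Fin c, |((E.filter fun v => χ v = i).card : ℝ) - (E.card : ℝ) / (c : ℝ)|

/-- The `c`-color discrepancy of the hypergraph with edge set `H`. -/
noncomputable def disc {V : Type} (H : Finset (Finset V)) (c : ℕ) : ℝ :=
  ⨅ χ : V → Fin c, discCol H c χ

/-- The `d`-fold symmetric product of a hypergraph: edge set `{E^d : E ∈ H}`
on the vertex set `V^d`. -/
def symProd {V : Type} [DecidableEq V] (H : Finset (Finset V)) (d : ℕ) :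
    Finset (Finset (Fin d → V)) :=
  H.image fun E => Fintype.piFinset fun _ : Fin d => E

open Finset

set_option linter.unusedSectionVars false

section Helpers

variable {V : Type} [Fintype V] [DecidableEq V] {c : ℕ} {H : Finset (Finset V)} {χ : V → Fin c}

theorem discCol_nonneg : 0 ≤ discCol H c χ := by
  apply Real.iSup_nonneg; intro E
  apply Real.iSup_nonneg; intro hE
  apply Real.iSup_nonneg; intro i
  exact abs_nonneg _

theorem le_discCol {E : Finset V} (hE : E ∈ H) (i : Fin c) :
    |((E.filter fun v => χ v = i).card : ℝ) - (E.card : ℝ) / (c : ℝ)| ≤ discCol H c χ := by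
  have h1 : |((E.filter fun v => χ v = i).card : ℝ) - (E.card : ℝ) / (c : ℝ)|
      ≤ ⨆ i : Fin c, |((E.filter fun v => χ v = i).card : ℝ) - (E.card : ℝ) / (c : ℝ)| :=
    le_ciSup (f := fun i : Fin c =>
      |((E.filter fun v => χ v = i).card : ℝ) - (E.card : ℝ) / (c : ℝ)|)
      (Set.Finite.bddAbove (Set.finite_range _)) i
  refine h1.trans ?_
  have h2 : (⨆ i : Fin c, |((E.filter fun v => χ v = i).card : ℝ) - (E.card : ℝ) / (c : ℝ)|)
      ≤ ⨆ (_ : E ∈ H), ⨆ i : Fin c,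
          |((E.filter fun v => χ v = i).card : ℝ) - (E.card : ℝ) / (c : ℝ)| := by
    refine le_ciSup (f := fun _ : E ∈ H => ⨆ i : Fin c,
      |((E.filter fun v => χ v = i).card : ℝ) - (E.card : ℝ) / (c : ℝ)|) ?_ hE
    exact ⟨_, by rintro y ⟨hy, rfl⟩; exact le_rfl⟩
  refine h2.trans ?_
  exact le_ciSup (f := fun E : Finset V => ⨆ (_ : E ∈ H), ⨆ i : Fin c,
    |((E.filter fun v => χ v = i).card : ℝ) - (E.card : ℝ) / (c : ℝ)|)
    (Set.Finite.bddAbove (Set.finite_range _)) E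

theorem discCol_le {a : ℝ} (ha : 0 ≤ a)
    (hb : ∀ E ∈ H, ∀ i : Fin c,
      |((E.filter fun v => χ v = i).card : ℝ) - (E.card : ℝ) / (c : ℝ)| ≤ a) :
    discCol H c χ ≤ a :=
  Real.iSup_le (fun E => Real.iSup_le (fun hE => Real.iSup_le (fun i => hb E hE i) ha) ha) ha

theorem le_disc [Nonempty (V → Fin c)] {b : ℝ}
    (hb : ∀ χ : V → Fin c, b ≤ discCol H c χ) : b ≤ disc H c :=
  le_ciInf hb

theorem disc_le_discCol (H : Finset (Finset V)) (c : ℕ) (χ₀ : V → Fin c) :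
    disc H c ≤ discCol H c χ₀ :=
  ciInf_le ⟨0, by rintro y ⟨χ, rfl⟩; exact discCol_nonneg⟩ χ₀

end Helpers

section Ramsey

variable {α : Type} [LinearOrder α] {κ : Type} [Fintype κ] [DecidableEq κ]

/-- end-homogeneity invariant -/
def endProp (f : Finset α → κ) (r : ℕ) (W R : Finset α) : Prop :=
  ∀ T ⊆ W, T.card = r →
    ∀ x ∈ R ∪ W.filter (fun v => ∀ u ∈ T, u < v),
    ∀ y ∈ R ∪ W.filter (fun v => ∀ u ∈ T, u < v),
      f (insert x T) = f (insert y T)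

theorem buildSeq (r : ℕ) (hr : 1 ≤ r) (j : ℕ) : ∀ M : ℕ, ∃ N : ℕ,
    ∀ (f : Finset α → κ) (V : Finset α), N ≤ V.card →
      ∃ W R : Finset α, W ⊆ V ∧ R ⊆ V ∧ W.card = j ∧ M ≤ R.card ∧
        (∀ w ∈ W, ∀ x ∈ R, w < x) ∧ endProp f r W R := by
  induction j with
  | zero =>
    intro M
    refine ⟨M, fun f V hV => ⟨∅, V, empty_subset _, Subset.refl _, card_empty, hV,
      by simp, ?_⟩⟩
    intro T hT hTcard
    have : T = ∅ := subset_empty.mp hT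
    subst this
    simp at hTcard
    omega
  | succ j IH =>
    intro M
    obtain ⟨N, hN⟩ := IH ((Fintype.card κ ^ ((j+1).choose r)) * M + 1)
    refine ⟨N, fun f V hV => ?_⟩
    obtain ⟨W, R, hWV, hRV, hWcard, hRcard, hord, hend⟩ := hN f V hV
    have hRne : R.Nonempty := card_pos.mp (by omega)
    set w := R.min' hRne with hw
    have hwR : w ∈ R := R.min'_mem hRne
    have hwW : w ∉ W := fun h => lt_irrefl w (hord w h w hwR)
    set W' : Finset α := insert w W with hW'
    have hW'card : W'.card = j + 1 := by rw [hW', card_insert_of_notMem hwW, hWcard]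
    -- classify elements of R.erase w
    set Φ : α → (↥(W'.powersetCard r) → κ) := fun x T => f (insert x T.1) with hΦ
    have hcard_fun : Fintype.card (↥(W'.powersetCard r) → κ)
        = Fintype.card κ ^ ((j+1).choose r) := by
      rw [Fintype.card_fun, Fintype.card_coe, card_powersetCard, hW'card]
    haveI : Nonempty κ := ⟨f ∅⟩
    obtain ⟨b, _, hb⟩ := exists_le_card_fiber_of_mul_le_card_of_maps_to
      (f := Φ) (s := R.erase w) (t := Finset.univ) (n := M)
      (fun a _ => mem_univ _) univ_nonempty
      (by
        rw [card_univ, hcard_fun, card_erase_of_mem hwR]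
        omega)
    set R' : Finset α := {x ∈ R.erase w | Φ x = b} with hR'
    have hR'sub : R' ⊆ R.erase w := filter_subset _ _
    have hR'R : R' ⊆ R := hR'sub.trans (erase_subset _ _)
    refine ⟨W', R', ?_, hR'R.trans hRV, hW'card, hb, ?_, ?_⟩
    · exact insert_subset (hRV hwR) hWV
    · intro w' hw' x hx
      rcases mem_insert.mp hw' with h | h
      · subst h
        have hxR : x ∈ R.erase w := hR'sub hx
        exact lt_of_le_of_ne (R.min'_le x (mem_of_mem_erase hxR))
          (Ne.symm (ne_of_mem_erase hxR))
      · exact hord w' h x (hR'R hx)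
    · -- endProp
      intro T hT hTcard x hxmem y hymem
      by_cases hwT : w ∈ T
      · -- filter part is empty; x,y ∈ R'
        have hfilt : W'.filter (fun v => ∀ u ∈ T, u < v) = ∅ := by
          rw [filter_eq_empty_iff]
          intro v hv hvall
          have hwv := hvall w hwT
          rcases mem_insert.mp hv with h | h
          · exact lt_irrefl _ (h ▸ hwv)
          · exact lt_irrefl _ ((hord v h w hwR).trans hwv)
        rw [hfilt, union_empty] at hxmem hymem
        have hUx : Φ x = b := (mem_filter.mp hxmem).2
        have hUy : Φ y = b := (mem_filter.mp hymem).2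
        have hTmem : T ∈ W'.powersetCard r := mem_powersetCard.mpr ⟨hT, hTcard⟩
        have := congrFun hUx ⟨T, hTmem⟩
        have h2 := congrFun hUy ⟨T, hTmem⟩
        simp only [hΦ] at this h2
        rw [this, h2]
      · -- T ⊆ W, use old endProp
        have hTW : T ⊆ W := fun u hu => by
          rcases mem_insert.mp (hT hu) with h | h
          · exact absurd (h ▸ hu) hwT
          · exact h
        have key : ∀ z, z ∈ R' ∪ W'.filter (fun v => ∀ u ∈ T, u < v) →
            z ∈ R ∪ W.filter (fun v => ∀ u ∈ T, u < v) := by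
          intro z hz
          rcases mem_union.mp hz with h | h
          · exact mem_union_left _ (hR'R h)
          · have hzW' := (mem_filter.mp h).1
            have hzgt := (mem_filter.mp h).2
            rcases mem_insert.mp hzW' with h' | h'
            · exact mem_union_left _ (h' ▸ hwR)
            · exact mem_union_right _ (mem_filter.mpr ⟨h', hzgt⟩)
        exact hend T hTW hTcard x (key x hxmem) y (key y hymem)

theorem myRamsey (r : ℕ) (n : ℕ) : ∃ N : ℕ,
    ∀ (f : Finset α → κ) (V : Finset α), N ≤ V.card →
      ∃ W : Finset α, W ⊆ V ∧ W.card = n ∧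
        ∀ S ⊆ W, S.card = r → ∀ S' ⊆ W, S'.card = r → f S = f S' := by
  induction r with
  | zero =>
    refine ⟨n, fun f V hV => ?_⟩
    obtain ⟨W, hWV, hWcard⟩ := exists_subset_card_eq hV
    refine ⟨W, hWV, hWcard, fun S _ hS S' _ hS' => ?_⟩
    rw [card_eq_zero.mp hS, card_eq_zero.mp hS']
  | succ r IH =>
    rcases Nat.eq_zero_or_pos r with hr | hr
    · -- r+1 = 1 : pigeonhole
      subst hr
      refine ⟨Fintype.card κ * n + 1, fun f V hV => ?_⟩
      haveI : Nonempty κ := ⟨f ∅⟩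
      obtain ⟨b, _, hb⟩ := exists_le_card_fiber_of_mul_le_card_of_maps_to
        (f := fun v => f {v}) (s := V) (t := Finset.univ) (n := n)
        (fun a _ => mem_univ _) univ_nonempty
        (by rw [card_univ]; omega)
      obtain ⟨W, hWsub, hWcard⟩ := exists_subset_card_eq hb
      refine ⟨W, (hWsub.trans (filter_subset _ _)), hWcard, ?_⟩
      intro S hS hScard S' hS' hS'card
      obtain ⟨v, hv⟩ := card_eq_one.mp hScard
      obtain ⟨v', hv'⟩ := card_eq_one.mp hS'card
      subst hv hv'
      have h1 : v ∈ {x ∈ V | f {x} = b} := hWsub (hS (mem_singleton_self v))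
      have h2 : v' ∈ {x ∈ V | f {x} = b} := hWsub (hS' (mem_singleton_self v'))
      rw [(mem_filter.mp h1).2, (mem_filter.mp h2).2]
    · -- step
      obtain ⟨N₁, hN₁⟩ := IH
      obtain ⟨N, hN⟩ := buildSeq (α := α) (κ := κ) r hr N₁ 0
      refine ⟨N, fun f V hV => ?_⟩
      haveI : Nonempty κ := ⟨f ∅⟩
      obtain ⟨W, R, hWV, _, hWcard, _, _, hend⟩ := hN f V hV
      set g : Finset α → κ := fun T =>
        if h : (W.filter fun v => ∀ u ∈ T, u < v).Nonempty then
          f (insert ((W.filter fun v => ∀ u ∈ T, u < v).min' h) T)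
        else Classical.arbitrary κ with hg
      obtain ⟨W', hW'W, hW'card, hghom⟩ := hN₁ g W (le_of_eq hWcard.symm)
      refine ⟨W', hW'W.trans hWV, hW'card, ?_⟩
      have key : ∀ S ⊆ W', S.card = r + 1 → ∃ hS : S.Nonempty,
          f S = g (S.erase (S.max' hS)) := by
        intro S hS hScard
        have hSne : S.Nonempty := card_pos.mp (by omega)
        refine ⟨hSne, ?_⟩
        set x := S.max' hSne with hx
        set T := S.erase x with hT
        have hxS : x ∈ S := S.max'_mem hSne
        have hTcard : T.card = r := by rw [hT, card_erase_of_mem hxS, hScard]; omega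
        have hTW : T ⊆ W := (erase_subset _ _).trans (hS.trans hW'W)
        have hxT : ∀ u ∈ T, u < x := fun u hu =>
          lt_of_le_of_ne (S.le_max' u (mem_of_mem_erase hu)) (ne_of_mem_erase hu)
        have hxfilt : x ∈ W.filter (fun v => ∀ u ∈ T, u < v) :=
          mem_filter.mpr ⟨hW'W (hS hxS), hxT⟩
        have hne : (W.filter fun v => ∀ u ∈ T, u < v).Nonempty := ⟨x, hxfilt⟩
        have hmin : (W.filter fun v => ∀ u ∈ T, u < v).min' hne
            ∈ W.filter (fun v => ∀ u ∈ T, u < v) := min'_mem _ _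
        have := hend T hTW hTcard x (mem_union_right _ hxfilt)
          ((W.filter fun v => ∀ u ∈ T, u < v).min' hne) (mem_union_right _ hmin)
        rw [hg]
        simp only [dif_pos hne]
        rw [← this, insert_erase hxS]
      intro S hS hScard S' hS' hS'card
      obtain ⟨hSne, h1⟩ := key S hS hScard
      obtain ⟨hS'ne, h2⟩ := key S' hS' hS'card
      rw [h1, h2]
      exact hghom _ ((erase_subset _ _).trans hS) (by rw [card_erase_of_mem (S.max'_mem hSne), hScard]; omega)
        _ ((erase_subset _ _).trans hS') (by rw [card_erase_of_mem (S'.max'_mem hS'ne), hS'card]; omega)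

theorem multiRamsey (d : ℕ) (κ : ℕ → Type) [∀ t, Fintype (κ t)] [∀ t, DecidableEq (κ t)]
    (n : ℕ) : ∃ N : ℕ,
    ∀ (F : ∀ t, Finset α → κ t) (V : Finset α), N ≤ V.card →
      ∃ W : Finset α, W ⊆ V ∧ W.card = n ∧
        ∀ t ≤ d, ∀ S ⊆ W, S.card = t → ∀ S' ⊆ W, S'.card = t → F t S = F t S' := by
  induction d with
  | zero =>
    refine ⟨n, fun F V hV => ?_⟩
    obtain ⟨W, hWV, hWcard⟩ := exists_subset_card_eq hV
    refine ⟨W, hWV, hWcard, fun t ht S _ hS S' _ hS' => ?_⟩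
    interval_cases t
    rw [card_eq_zero.mp hS, card_eq_zero.mp hS']
  | succ d IH =>
    obtain ⟨N₁, hN₁⟩ := IH
    obtain ⟨N, hN⟩ := myRamsey (α := α) (κ := κ (d+1)) (d+1) N₁
    refine ⟨N, fun F V hV => ?_⟩
    obtain ⟨W₁, hW₁V, hW₁card, htop⟩ := hN (F (d+1)) V hV
    obtain ⟨W, hWW₁, hWcard, hlow⟩ := hN₁ F W₁ (le_of_eq hW₁card.symm)
    refine ⟨W, hWW₁.trans hW₁V, hWcard, fun t ht S hS hScard S' hS' hS'card => ?_⟩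
    rcases Nat.lt_succ_iff_lt_or_eq.mp (Nat.lt_succ_of_le ht) with h | h
    · exact hlow t (Nat.lt_succ_iff.mp h) S hS hScard S' hS' hS'card
    · subst h
      exact htop S (hS.trans hWW₁) hScard S' (hS'.trans hWW₁) hS'card

end Ramsey

section FDsec

/-- step-`h` finite difference operator -/
def FD (h : ℕ) (g : ℕ → ℝ) : ℕ → ℝ := fun s => g (s + h) - g s

theorem FD_iter_bound (h : ℕ) : ∀ (k : ℕ) (w : ℕ) (g : ℕ → ℝ) (C : ℝ),
    (∀ s, s ≤ w → |g s| ≤ C) → ∀ s, s + k * h ≤ w → |(FD h)^[k] g s| ≤ 2 ^ k * C := by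
  intro k
  induction k with
  | zero => intro w g C hg s hs; simpa using hg s (by omega)
  | succ k IH =>
    intro w g C hg s hs
    rw [Nat.succ_mul] at hs
    have hhw : h ≤ w := by omega
    rw [Function.iterate_succ_apply]
    have h2 : ∀ u, u ≤ w - h → |FD h g u| ≤ 2 * C := by
      intro u hu
      calc |g (u + h) - g u| ≤ |g (u+h)| + |g u| := abs_sub _ _
        _ ≤ C + C := add_le_add (hg _ (by omega)) (hg _ (by omega))
        _ = 2 * C := by ring
    have := IH (w - h) (FD h g) (2 * C) h2 s (by omega)

    calc |(FD h)^[k] (FD h g) s| ≤ 2 ^ k * (2 * C) := this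
      _ = 2 ^ (k+1) * C := by ring

theorem FD_top (h : ℕ) : ∀ (T : ℕ) (δ : ℕ → ℝ),
    (FD h)^[T] (fun s => ∑ t ∈ range (T+1), (s.choose t : ℝ) * δ t) 0
      = (h : ℝ) ^ T * δ T := by
  intro T
  induction T with
  | zero => simp
  | succ T IH =>
    intro δ
    rw [Function.iterate_succ_apply]
    have key : FD h (fun s => ∑ t ∈ range (T+2), (s.choose t : ℝ) * δ t)
        = fun s => ∑ t ∈ range (T+1), (s.choose t : ℝ) *
            (fun x => ∑ u ∈ Finset.Ioc x (T+1), (h.choose (u - x) : ℝ) * δ u) t := by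
      funext s
      show (∑ t ∈ range (T+2), ((s+h).choose t : ℝ) * δ t)
          - ∑ t ∈ range (T+2), (s.choose t : ℝ) * δ t = _
      rw [← Finset.sum_sub_distrib]
      have vdm : ∀ t, (((s+h).choose t : ℝ)) - (s.choose t : ℝ)
          = ∑ x ∈ range t, (s.choose x : ℝ) * (h.choose (t - x) : ℝ) := by
        intro t
        have := Nat.add_choose_eq s h t
        rw [Finset.Nat.sum_antidiagonal_eq_sum_range_succ_mk] at this
        rw [Finset.sum_range_succ] at this
        simp only [Nat.sub_self, Nat.choose_zero_right, mul_one] at this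
        have : ((s+h).choose t : ℝ) = (∑ x ∈ range t, (s.choose x * h.choose (t - x) : ℕ) : ℕ) + (s.choose t : ℝ) := by
          exact_mod_cast congrArg (Nat.cast (R := ℝ)) this
        rw [this]
        push_cast
        ring
      calc ∑ t ∈ range (T+2), (((s+h).choose t : ℝ) * δ t - (s.choose t : ℝ) * δ t)
          = ∑ t ∈ range (T+2), ∑ x ∈ range t, (s.choose x : ℝ) * ((h.choose (t-x) : ℝ) * δ t) := by
            refine Finset.sum_congr rfl fun t _ => ?_
            rw [← sub_mul, vdm t, Finset.sum_mul]
            refine Finset.sum_congr rfl fun x _ => by ring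
        _ = ∑ t ∈ range (T+2), ∑ x ∈ range (T+1),
              (if x < t then (s.choose x : ℝ) * ((h.choose (t-x) : ℝ) * δ t) else 0) := by
            refine Finset.sum_congr rfl fun t ht => ?_
            rw [← Finset.sum_filter]
            refine (Finset.sum_congr ?_ fun x _ => rfl).symm
            ext x
            simp only [Finset.mem_filter, Finset.mem_range] at *
            constructor
            · rintro ⟨h1, h2⟩; exact h2
            · intro hx; exact ⟨by omega, hx⟩
        _ = ∑ x ∈ range (T+1), ∑ t ∈ range (T+2),
              (if x < t then (s.choose x : ℝ) * ((h.choose (t-x) : ℝ) * δ t) else 0) :=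
            Finset.sum_comm
        _ = ∑ x ∈ range (T+1), (s.choose x : ℝ) * ∑ u ∈ Finset.Ioc x (T+1), (h.choose (u - x) : ℝ) * δ u := by
            refine Finset.sum_congr rfl fun x hx => ?_
            rw [Finset.mul_sum, ← Finset.sum_filter]
            refine Finset.sum_congr ?_ fun t _ => by ring
            ext t
            simp only [Finset.mem_filter, Finset.mem_range, Finset.mem_Ioc]
            omega
    rw [key, IH]
    have : (∑ u ∈ Finset.Ioc T (T+1), (h.choose (u - T) : ℝ) * δ u) = (h : ℝ) * δ (T+1) := by
      have : Finset.Ioc T (T+1) = {T+1} := by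
        ext u; simp only [Finset.mem_Ioc, Finset.mem_singleton]; omega
      rw [this, Finset.sum_singleton]
      simp [Nat.choose_one_right]
    rw [this]
    ring

end FDsec


theorem counting
    (n d c : ℕ) (ξ : (Fin d → Fin n) → Fin c)
    (F : (t : ℕ) → Finset (Fin n) → ((Fin d → Fin t) → Fin c))
    (hF : ∀ (T : Finset (Fin n)) (φ : Fin d → Fin (T.card)),
      F T.card T φ = ξ (fun j => ((T.orderIsoOfFin rfl) (φ j) : Fin n)))
    (W : Finset (Fin n))
    (homog : ∀ t, t ≤ d → ∀ S, S ⊆ W → S.card = t → ∀ S', S' ⊆ W → S'.card = t →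
      F t S = F t S')
    (T0 : ℕ → Finset (Fin n)) (hT0 : ∀ t, t ≤ d → T0 t ⊆ W ∧ (T0 t).card = t)
    (A : Fin c → ℕ → ℕ)
    (hA : ∀ i t, A i t = (Finset.univ.filter
      (fun φ : Fin d → Fin t => Function.Surjective φ ∧ F t (T0 t) φ = i)).card)
    (hAzero : ∀ i t, d < t → A i t = 0)
    (E : Finset (Fin n)) (hEW : E ⊆ W) (i : Fin c) :
    ((Fintype.piFinset fun _ : Fin d => E).filter fun x => ξ x = i).card
      = ∑ t ∈ range (d+1), E.card.choose t * A i t := by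
  classical
  have step1 : ((Fintype.piFinset fun _ : Fin d => E).filter fun x => ξ x = i).card
      = ∑ T ∈ E.powerset,
          (((Fintype.piFinset fun _ : Fin d => E).filter fun x => ξ x = i).filter
            (fun x => Finset.image x Finset.univ = T)).card := by
    refine Finset.card_eq_sum_card_fiberwise ?_
    intro x hx
    rw [Finset.mem_coe, mem_powerset]
    intro u hu
    obtain ⟨j, _, rfl⟩ := Finset.mem_image.mp hu
    have hx' := Finset.mem_filter.mp hx
    exact (Fintype.mem_piFinset.mp hx'.1) j
  have step2 : ∀ T ∈ E.powerset,
      (((Fintype.piFinset fun _ : Fin d => E).filter fun x => ξ x = i).filter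
        (fun x => Finset.image x Finset.univ = T)).card = A i T.card := by
    intro T hTmem
    have hTE : T ⊆ E := mem_powerset.mp hTmem
    by_cases ht : T.card ≤ d
    · -- bijection
      have hTW : T ⊆ W := hTE.trans hEW
      have hhom : F T.card (T0 T.card) = F T.card T :=
        homog T.card ht (T0 T.card) (hT0 T.card ht).1 (hT0 T.card ht).2 T hTW rfl
      rw [hA]
      set iso := T.orderIsoOfFin rfl with hiso
      refine Finset.card_bij'
        (i := fun x hx => fun j => iso.symm ⟨x j, ?_⟩)
        (j := fun φ hφ => fun j => (iso (φ j) : Fin n)) ?_ ?_ ?_ ?_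
      · -- x j ∈ T
        have hx2 := (Finset.mem_filter.mp hx).2
        rw [← hx2]
        exact Finset.mem_image.mpr ⟨j, Finset.mem_univ j, rfl⟩
      · -- forward membership
        intro x hx
        simp only [Finset.mem_filter, Finset.mem_univ, true_and]
        have hx1 := Finset.mem_filter.mp (Finset.mem_filter.mp hx).1
        have himg := (Finset.mem_filter.mp hx).2
        constructor
        · -- surjective
          intro b
          have hmem : (iso b : Fin n) ∈ Finset.image x Finset.univ := by
            rw [himg]; exact (iso b).2
          obtain ⟨j, _, hj⟩ := Finset.mem_image.mp hmem
          refine ⟨j, ?_⟩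
          have hsub : (⟨x j, by rw [← himg]; exact Finset.mem_image.mpr ⟨j, Finset.mem_univ j, rfl⟩⟩ :
              {a // a ∈ T}) = iso b := Subtype.ext hj
          have := congrArg iso.symm hsub
          simpa using this
        · -- color condition
          rw [hhom, hF T]
          have : ∀ j, ((iso (iso.symm ⟨x j, by
              rw [← (Finset.mem_filter.mp hx).2]
              exact Finset.mem_image.mpr ⟨j, Finset.mem_univ j, rfl⟩⟩)) : Fin n) = x j := by
            intro j
            rw [OrderIso.apply_symm_apply]
          calc ξ _ = ξ x := by
                refine congrArg ξ ?_
                funext j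
                exact this j
            _ = i := hx1.2
      · -- backward membership
        intro φ hφ
        have hφ' := Finset.mem_filter.mp hφ
        refine Finset.mem_filter.mpr ⟨Finset.mem_filter.mpr ⟨?_, ?_⟩, ?_⟩
        · exact Fintype.mem_piFinset.mpr fun j => hTE (iso (φ j)).2
        · -- ξ = i
          have := hφ'.2.2
          rw [hhom, hF T] at this
          exact this
        · -- image = T
          apply Finset.Subset.antisymm
          · intro u hu
            obtain ⟨j, _, rfl⟩ := Finset.mem_image.mp hu
            exact (iso (φ j)).2
          · intro u hu
            obtain ⟨b, hb⟩ := hφ'.2.1 (iso.symm ⟨u, hu⟩)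
            refine Finset.mem_image.mpr ⟨b, Finset.mem_univ b, ?_⟩
            show ((iso (φ b)) : Fin n) = u
            rw [hb, OrderIso.apply_symm_apply]
      · -- left inverse
        intro x hx
        funext j
        simp only [OrderIso.apply_symm_apply]
      · -- right inverse
        intro φ hφ
        funext j
        simp only [Subtype.coe_eta, OrderIso.symm_apply_apply]
    · -- T.card > d : both sides zero
      push_neg at ht
      rw [hAzero i T.card ht]
      rw [Finset.card_eq_zero, Finset.filter_eq_empty_iff]
      intro x hx
      intro himg
      have hcard : (Finset.image x Finset.univ).card ≤ d := by
        calc (Finset.image x Finset.univ).card ≤ (Finset.univ : Finset (Fin d)).card :=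
              Finset.card_image_le
          _ = d := by simp
      rw [himg] at hcard
      omega
  rw [step1, Finset.sum_congr rfl step2]
  rw [Finset.powerset_card_biUnion, Finset.sum_biUnion ((Finset.pairwise_disjoint_powersetCard E).set_pairwise _)]
  have step3 : ∀ j ∈ range (E.card + 1),
      ∑ T ∈ Finset.powersetCard j E, A i T.card = E.card.choose j * A i j := by
    intro j _
    have : ∀ T ∈ Finset.powersetCard j E, A i T.card = A i j := by
      intro T hT
      rw [(Finset.mem_powersetCard.mp hT).2]
    rw [Finset.sum_congr rfl this, Finset.sum_const, Finset.card_powersetCard, smul_eq_mul]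
  rw [Finset.sum_congr rfl step3]
  -- range (E.card+1) vs range (d+1)
  set s := E.card with hs
  have hsub1 : range (s+1) ⊆ range (max s d + 1) := by
    intro j hj; simp only [mem_range] at *; omega
  have hsub2 : range (d+1) ⊆ range (max s d + 1) := by
    intro j hj; simp only [mem_range] at *; omega
  have hz1 : ∀ j ∈ range (max s d + 1), j ∉ range (s+1) → s.choose j * A i j = 0 := by
    intro j _ hj
    simp only [mem_range, not_lt] at hj
    rw [Nat.choose_eq_zero_of_lt (by omega)]
    ring
  have hz2 : ∀ j ∈ range (max s d + 1), j ∉ range (d+1) → s.choose j * A i j = 0 := by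
    intro j _ hj
    simp only [mem_range, not_lt] at hj
    rw [hAzero i j (by omega)]
    ring
  calc ∑ j ∈ range (s+1), s.choose j * A i j
      = ∑ j ∈ range (max s d + 1), s.choose j * A i j := Finset.sum_subset hsub1 hz1
    _ = ∑ j ∈ range (d+1), s.choose j * A i j := (Finset.sum_subset hsub2 hz2).symm


theorem nat_eq_of_abs_sub_lt_one {a b : ℕ} (h : |(a:ℝ) - b| < 1) : a = b := by
  rcases Nat.lt_trichotomy a b with hl | he | hl
  · have h1 : (a:ℝ) + 1 ≤ b := by exact_mod_cast Nat.succ_le_of_lt hl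
    have h2 := abs_lt.mp h
    linarith [h2.1]
  · exact he
  · have h1 : (b:ℝ) + 1 ≤ a := by exact_mod_cast Nat.succ_le_of_lt hl
    have h2 := abs_lt.mp h
    linarith [h2.2]

set_option maxHeartbeats 1000000 in
theorem endgame (c d w : ℕ) (hc3 : 3 ∣ c) (hcpos : 0 < c) (hd : 2 ≤ d) (heven : Even d)
    (hw15 : 15 ≤ w) (hdw : d ∣ w) (hbig : 2^(d+1) * d^3 ≤ w)
    (A : Fin c → ℕ → ℕ) (M : ℝ) (hM : M < (w:ℝ)^2 / 6)
    (hdev : ∀ s, s ≤ w → ∀ i : Fin c,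
      |(↑(∑ t ∈ range (d+1), s.choose t * A i t) : ℝ) - (s:ℝ)^d / c| ≤ M)
    (hsum : ∀ s, s ≤ w → ∑ i : Fin c, ∑ t ∈ range (d+1), s.choose t * A i t = s^d) :
    False := by
  have hcR : (0:ℝ) < c := by exact_mod_cast hcpos
  set N : ℕ → ℕ := fun t => ∑ i : Fin c, A i t with hN
  have hNsum : ∀ s, s ≤ w → ∑ t ∈ range (d+1), s.choose t * N t = s^d := by
    intro s hs
    rw [← hsum s hs, Finset.sum_comm]
    exact Finset.sum_congr rfl fun t _ => by rw [hN, Finset.mul_sum]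
  have hN0 : N 0 = 0 := by
    have h0 := hNsum 0 (by omega)
    have hcoll : ∑ t ∈ range (d+1), Nat.choose 0 t * N t = N 0 := by
      rw [Finset.sum_eq_single_of_mem 0 (mem_range.mpr (by omega))]
      · simp
      · intro t _ ht; rw [Nat.choose_eq_zero_of_lt (by omega)]; ring
    rw [hcoll, Nat.zero_pow (by omega)] at h0
    exact h0
  have hN1 : N 1 = 1 := by
    have h1 := hNsum 1 (by omega)
    have heq : ∑ t ∈ range (d+1), Nat.choose 1 t * N t
        = ∑ t ∈ range 2, Nat.choose 1 t * N t := by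
      symm
      refine Finset.sum_subset (by intro t ht; simp only [mem_range] at *; omega) ?_
      intro t _ ht
      simp only [mem_range, not_lt] at ht
      rw [Nat.choose_eq_zero_of_lt (by omega)]; ring
    rw [heq] at h1
    simp [Finset.sum_range_succ, hN0] at h1
    omega
  have hN2 : N 2 = 2^d - 2 := by
    have h2 := hNsum 2 (by omega)
    have heq : ∑ t ∈ range (d+1), Nat.choose 2 t * N t
        = ∑ t ∈ range 3, Nat.choose 2 t * N t := by
      symm
      refine Finset.sum_subset (by intro t ht; simp only [mem_range] at *; omega) ?_
      intro t _ ht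
      simp only [mem_range, not_lt] at ht
      rw [Nat.choose_eq_zero_of_lt (by omega)]; ring
    rw [heq] at h2
    simp [Finset.sum_range_succ, hN0, hN1] at h2
    omega
  have h2dmod : 2^d % 3 = 1 := by
    obtain ⟨k, hk⟩ := heven
    have h4 : 2^d = 4^k := by rw [hk, ← two_mul, pow_mul]; norm_num
    rw [h4, Nat.pow_mod]
    norm_num
  have h2dge : 4 ≤ 2^d := by
    calc 4 = 2^2 := by norm_num
      _ ≤ 2^d := Nat.pow_le_pow_right (by norm_num) hd
  have hN2mod : ¬ (3 ∣ N 2) := by rw [hN2]; omega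
  have hdpos : 0 < d := by omega
  have hwd : d ≤ w := Nat.le_of_dvd (by omega) hdw
  set h : ℕ := w / d with hh
  have hwdh : w = d * h := by rw [hh]; exact (Nat.mul_div_cancel' hdw).symm
  have hkey : 2^(d+1) * d^2 ≤ h := by
    have hstep : d * (2^(d+1) * d^2) ≤ d * h := by
      calc d * (2^(d+1) * d^2) = 2^(d+1) * d^3 := by ring
        _ ≤ w := hbig
        _ = d * h := hwdh
    exact Nat.le_of_mul_le_mul_left hstep hdpos
  have hhpos : 0 < h := by
    have : 0 < 2^(d+1) * d^2 := by positivity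
    omega
  have hMnn : 0 ≤ M := le_trans (abs_nonneg _) (hdev 0 (by omega) (⟨0, hcpos⟩ : Fin c))
  -- elimination of levels ≥ 3
  have helim : ∀ t, 3 ≤ t → t ≤ d → ∀ i i' : Fin c, A i t = A i' t := by
    suffices Hs : ∀ k t, t = d - k → 3 ≤ t → t ≤ d → ∀ i i' : Fin c, A i t = A i' t by
      intro t h3 htd i i'
      exact Hs (d - t) t (by omega) h3 htd i i'
    intro k
    induction k using Nat.strong_induction_on with
    | _ k IH =>
      intro T hT h3 hTd i i'
      have hkT : k ≥ d - T := by omega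
      set δ : ℕ → ℝ := fun t => (A i t : ℝ) - A i' t with hδ
      have hzero : ∀ u, T < u → u ≤ d → δ u = 0 := by
        intro u hu hud
        have hlt : d - u < k := by omega
        have he1 : u = d - (d - u) := by omega
        have he2 : 3 ≤ u := by omega
        have := IH (d - u) hlt u he1 he2 hud i i'
        simp only [hδ, this, sub_self]
      have hgbound : ∀ s, s ≤ w →
          |(fun s => ∑ t ∈ range (T+1), (s.choose t : ℝ) * δ t) s| ≤ 2 * M := by
        intro s hs
        have hext : ∑ t ∈ range (T+1), (s.choose t : ℝ) * δ t
            = ∑ t ∈ range (d+1), (s.choose t : ℝ) * δ t := by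
          refine Finset.sum_subset (by intro t ht; simp only [mem_range] at *; omega) ?_
          intro t hD ht
          simp only [mem_range, not_lt] at hD ht
          rw [hzero t (by omega) (by omega)]; ring
        have hcast : ∀ i'' : Fin c, (↑(∑ t ∈ range (d+1), s.choose t * A i'' t) : ℝ)
            = ∑ t ∈ range (d+1), (s.choose t : ℝ) * (A i'' t : ℝ) := by
          intro i''; push_cast; rfl
        have e1 : ∀ t, (s.choose t : ℝ) * δ t
            = (s.choose t : ℝ) * (A i t : ℝ) - (s.choose t : ℝ) * (A i' t : ℝ) := by
          intro t; simp only [hδ]; ring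
        have hsplit : (fun s => ∑ t ∈ range (T+1), (s.choose t : ℝ) * δ t) s
            = ((↑(∑ t ∈ range (d+1), s.choose t * A i t) : ℝ) - (s:ℝ)^d / c)
              - ((↑(∑ t ∈ range (d+1), s.choose t * A i' t) : ℝ) - (s:ℝ)^d / c) := by
          show ∑ t ∈ range (T+1), (s.choose t : ℝ) * δ t = _
          rw [hext, hcast i, hcast i',
            Finset.sum_congr rfl (fun t _ => e1 t), Finset.sum_sub_distrib]
          ring
        rw [hsplit]
        calc |_| ≤ |(↑(∑ t ∈ range (d+1), s.choose t * A i t) : ℝ) - (s:ℝ)^d / c|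
              + |(↑(∑ t ∈ range (d+1), s.choose t * A i' t) : ℝ) - (s:ℝ)^d / c| := abs_sub _ _
          _ ≤ M + M := add_le_add (hdev s hs i) (hdev s hs i')
          _ = 2 * M := by ring
      have hThw : 0 + T * h ≤ w := by
        have : T * h ≤ d * h := Nat.mul_le_mul_right h hTd
        omega
      have hbound := FD_iter_bound h T w
        (fun s => ∑ t ∈ range (T+1), (s.choose t : ℝ) * δ t) (2*M) hgbound 0 hThw
      rw [FD_top h T δ] at hbound
      have hhR : (1:ℝ) ≤ h := by exact_mod_cast hhpos
      have hineq : (2:ℝ)^T * (2*M) < (h:ℝ)^T := by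
        have h1 : (2:ℝ)^T * (2*M) < 2^(T+1) * ((w:ℝ)^2/6) := by
          have hp : (0:ℝ) < 2^(T+1) := by positivity
          calc (2:ℝ)^T * (2*M) = 2^(T+1) * M := by ring
            _ < 2^(T+1) * ((w:ℝ)^2/6) := by exact mul_lt_mul_of_pos_left hM hp
        refine h1.trans_le ?_
        have hwR : (w:ℝ) = d * h := by exact_mod_cast hwdh
        have hkeyR : (2:ℝ)^(d+1) * (d:ℝ)^2 ≤ h := by exact_mod_cast hkey
        have h2le : (2:ℝ)^(T+1) ≤ 2^(d+1) := by
          apply pow_le_pow_right₀ (by norm_num)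
          omega
        have hh3T : (h:ℝ)^3 ≤ (h:ℝ)^T := pow_le_pow_right₀ hhR h3
        have hmain : (2:ℝ)^(T+1) * ((w:ℝ)^2/6) ≤ (h:ℝ)^3 := by
          rw [hwR]
          have e1 : (2:ℝ)^(T+1) * (((d:ℝ)*h)^2/6) = ((2:ℝ)^(T+1) * (d:ℝ)^2 / 6) * (h:ℝ)^2 := by
            ring
          rw [e1]
          have e2 : ((2:ℝ)^(T+1) * (d:ℝ)^2 / 6) ≤ (h:ℝ) := by
            have hd2 : (0:ℝ) ≤ (d:ℝ)^2 := by positivity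
            have hx0 : (0:ℝ) ≤ (2:ℝ)^(T+1) * (d:ℝ)^2 := by positivity
            have hmm := mul_le_mul_of_nonneg_right h2le hd2
            linarith [hkeyR, hmm, hx0]
          calc ((2:ℝ)^(T+1) * (d:ℝ)^2 / 6) * (h:ℝ)^2 ≤ (h:ℝ) * (h:ℝ)^2 :=
                mul_le_mul_of_nonneg_right e2 (by positivity)
            _ = (h:ℝ)^3 := by ring
        exact hmain.trans hh3T
      have habs : |δ T| < 1 := by
        rw [abs_mul, abs_pow, abs_of_nonneg (Nat.cast_nonneg h)] at hbound
        have hhTpos : (0:ℝ) < (h:ℝ)^T := by positivity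
        nlinarith [abs_nonneg (δ T)]
      exact nat_eq_of_abs_sub_lt_one habs
  -- levels ≥ 3 exactly balanced
  have hNt : ∀ t, 3 ≤ t → t ≤ d → ∀ i : Fin c, c * A i t = N t := by
    intro t h3 htd i
    rw [hN]
    simp only []
    calc c * A i t = ∑ _i' : Fin c, A i t := by
          rw [Finset.sum_const, Finset.card_univ, Fintype.card_fin, smul_eq_mul]
      _ = ∑ i' : Fin c, A i' t := Finset.sum_congr rfl fun i' _ => helim t h3 htd i i'
  -- bad color at level 2
  have hbad : ∃ i2 : Fin c, (c:ℝ) / 2 ≤ |(c:ℝ) * A i2 2 - N 2| := by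
    by_contra hcon
    push_neg at hcon
    set i0 : Fin c := ⟨0, hcpos⟩ with hi0
    have hall : ∀ i, A i 2 = A i0 2 := by
      intro i
      have h1 := hcon i
      have h2 := hcon i0
      have hdiff : |(c:ℝ) * A i 2 - (c:ℝ) * A i0 2| < c := by
        calc |(c:ℝ) * A i 2 - (c:ℝ) * A i0 2|
            ≤ |(c:ℝ) * A i 2 - N 2| + |(N 2 : ℝ) - (c:ℝ) * A i0 2| := abs_sub_le _ _ _
          _ = |(c:ℝ) * A i 2 - N 2| + |(c:ℝ) * A i0 2 - N 2| := by rw [abs_sub_comm ((N 2:ℝ)) _]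
          _ < c/2 + c/2 := add_lt_add h1 h2
          _ = c := by ring
      have hlt1 : |(A i 2 : ℝ) - A i0 2| < 1 := by
        have e : (c:ℝ) * A i 2 - (c:ℝ) * A i0 2 = (c:ℝ) * ((A i 2 : ℝ) - A i0 2) := by ring
        rw [e, abs_mul, abs_of_pos hcR] at hdiff
        by_contra hge
        push_neg at hge
        nlinarith
      exact nat_eq_of_abs_sub_lt_one hlt1
    have hN2eq : N 2 = c * A i0 2 := by
      rw [hN]
      simp only []
      calc ∑ i : Fin c, A i 2 = ∑ _i : Fin c, A i0 2 :=
            Finset.sum_congr rfl fun i _ => hall i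
        _ = c * A i0 2 := by
            rw [Finset.sum_const, Finset.card_univ, Fintype.card_fin, smul_eq_mul]
    exact hN2mod (hN2eq ▸ (hc3.mul_right _))
  obtain ⟨i2, hi2⟩ := hbad
  have hA0 : A i2 0 = 0 := by
    have hle : A i2 0 ≤ N 0 := by
      rw [hN]
      exact Finset.single_le_sum (f := fun i => A i 0) (fun _ _ => Nat.zero_le _) (mem_univ i2)
    omega
  have hA1 : A i2 1 ≤ 1 := by
    have hle : A i2 1 ≤ N 1 := by
      rw [hN]
      exact Finset.single_le_sum (f := fun i => A i 1) (fun _ _ => Nat.zero_le _) (mem_univ i2)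
    omega
  -- final evaluation at s = w
  have hXw : (↑(∑ t ∈ range (d+1), w.choose t * A i2 t) : ℝ) - (w:ℝ)^d / c
      = (w:ℝ) * ((A i2 1 : ℝ) - 1/c) + (w.choose 2 : ℝ) * ((A i2 2 : ℝ) - (N 2 : ℝ)/c) := by
    have hwpow : (w:ℝ)^d = ∑ t ∈ range (d+1), (w.choose t : ℝ) * (N t : ℝ) := by
      have hq := hNsum w le_rfl
      have hq2 : ((∑ t ∈ range (d+1), w.choose t * N t : ℕ) : ℝ) = ((w^d : ℕ) : ℝ) := by
        exact_mod_cast congrArg (fun x : ℕ => (x:ℝ)) hq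
      push_cast at hq2
      linarith [hq2]
    have hcast : (↑(∑ t ∈ range (d+1), w.choose t * A i2 t) : ℝ)
        = ∑ t ∈ range (d+1), (w.choose t : ℝ) * (A i2 t : ℝ) := by push_cast; rfl
    rw [hcast, hwpow]
    rw [Finset.sum_div, ← Finset.sum_sub_distrib]
    have hterm : ∀ t ∈ range (d+1),
        (w.choose t : ℝ) * (A i2 t : ℝ) - (w.choose t : ℝ) * (N t : ℝ) / c
          = (w.choose t : ℝ) * ((A i2 t : ℝ) - (N t : ℝ)/c) := fun t _ => by ring
    rw [Finset.sum_congr rfl hterm]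
    have hzero3 : ∀ t ∈ range (d+1), t ∉ range 3 →
        (w.choose t : ℝ) * ((A i2 t : ℝ) - (N t : ℝ)/c) = 0 := by
      intro t ht ht3
      simp only [mem_range, not_lt] at ht3 ht
      have h5 := hNt t (by omega) (by omega) i2
      have hAval : (A i2 t : ℝ) = (N t : ℝ)/c := by
        rw [eq_div_iff (ne_of_gt hcR)]
        exact_mod_cast (mul_comm c (A i2 t) ▸ h5)
      rw [hAval]
      ring
    rw [← Finset.sum_subset (by intro t ht; simp only [mem_range] at *; omega) hzero3]
    rw [Finset.sum_range_succ, Finset.sum_range_succ, Finset.sum_range_succ,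
      Finset.sum_range_zero]
    rw [hA0, hN0, hN1]
    simp [Nat.choose_one_right]
  have hdevw := hdev w le_rfl i2
  rw [hXw] at hdevw
  -- lower bound the absolute value
  have hb2 : (1:ℝ)/2 ≤ |(A i2 2 : ℝ) - (N 2 : ℝ)/c| := by
    have e : (A i2 2 : ℝ) - (N 2 : ℝ)/c = ((c:ℝ) * A i2 2 - N 2)/c := by
      field_simp
    rw [e, abs_div, abs_of_pos hcR, le_div_iff₀ hcR]
    linarith [hi2]
  have ha1 : |(A i2 1 : ℝ) - 1/c| ≤ 1 := by
    have h1c : (0:ℝ) < 1/c := by positivity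
    have h1c' : (1:ℝ)/c ≤ 1 := by
      rw [div_le_one hcR]
      exact_mod_cast hcpos
    have hA1R : (A i2 1 : ℝ) ≤ 1 := by exact_mod_cast hA1
    rw [abs_le]
    refine ⟨?_, ?_⟩
    · have := Nat.cast_nonneg (α := ℝ) (A i2 1)
      linarith
    · linarith
  have hch2 : (w.choose 2 : ℝ) = (w:ℝ) * ((w:ℝ) - 1) / 2 := by
    have heven2 : 2 ∣ w * (w-1) := by
      have he := Nat.even_mul_succ_self (w-1)
      have hw1 : w - 1 + 1 = w := by omega
      rw [hw1] at he
      exact (Nat.mul_comm (w-1) w ▸ he).two_dvd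
    have h2 : w.choose 2 * 2 = w * (w-1) := by
      rw [Nat.choose_two_right]
      exact Nat.div_mul_cancel heven2
    have h3 : ((w.choose 2 : ℕ) : ℝ) * 2 = (w:ℝ) * ((w:ℝ) - 1) := by
      have := congrArg (fun x : ℕ => (x:ℝ)) h2
      push_cast [Nat.cast_sub (by omega : 1 ≤ w)] at this
      linarith [this]
    linarith [h3]
  -- lower bound |X - w^d/c| and contradiction
  have hchnn : (0:ℝ) ≤ (w.choose 2 : ℝ) := Nat.cast_nonneg _
  have habs_lower : (w.choose 2 : ℝ) * (1/2) - (w:ℝ) * 1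
      ≤ |(w:ℝ) * ((A i2 1 : ℝ) - 1/c) + (w.choose 2 : ℝ) * ((A i2 2 : ℝ) - (N 2 : ℝ)/c)| := by
    have t1 : (w.choose 2 : ℝ) * (1/2) ≤ (w.choose 2 : ℝ) * |(A i2 2 : ℝ) - (N 2 : ℝ)/c| :=
      mul_le_mul_of_nonneg_left hb2 hchnn
    have t2 : (w:ℝ) * |(A i2 1 : ℝ) - 1/c| ≤ (w:ℝ) * 1 :=
      mul_le_mul_of_nonneg_left ha1 (Nat.cast_nonneg _)
    have t3 : (w.choose 2 : ℝ) * |(A i2 2 : ℝ) - (N 2 : ℝ)/c|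
        = |(w.choose 2 : ℝ) * ((A i2 2 : ℝ) - (N 2 : ℝ)/c)| := by
      rw [abs_mul, Nat.abs_cast]
    have t4 : (w:ℝ) * |(A i2 1 : ℝ) - 1/c|
        = |(w:ℝ) * ((A i2 1 : ℝ) - 1/c)| := by
      rw [abs_mul, Nat.abs_cast]
    have t5 : |(w.choose 2 : ℝ) * ((A i2 2 : ℝ) - (N 2 : ℝ)/c)|
        - |(w:ℝ) * ((A i2 1 : ℝ) - 1/c)|
        ≤ |(w:ℝ) * ((A i2 1 : ℝ) - 1/c) + (w.choose 2 : ℝ) * ((A i2 2 : ℝ) - (N 2 : ℝ)/c)| := by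
      have t5' := abs_sub ((w:ℝ) * ((A i2 1 : ℝ) - 1/c) + (w.choose 2 : ℝ) * ((A i2 2 : ℝ) - (N 2 : ℝ)/c))
        ((w:ℝ) * ((A i2 1 : ℝ) - 1/c))
      have e5 : (w:ℝ) * ((A i2 1 : ℝ) - 1/c) + (w.choose 2 : ℝ) * ((A i2 2 : ℝ) - (N 2 : ℝ)/c)
          - (w:ℝ) * ((A i2 1 : ℝ) - 1/c) = (w.choose 2 : ℝ) * ((A i2 2 : ℝ) - (N 2 : ℝ)/c) := by
        ring
      rw [e5] at t5'
      linarith [t5']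
    linarith [t1, t2, t3.le, t4.le, t5, t3.ge, t4.ge]
  have hfinal : (w.choose 2 : ℝ) * (1/2) - (w:ℝ) ≤ M := by
    calc (w.choose 2 : ℝ) * (1/2) - (w:ℝ) = (w.choose 2 : ℝ) * (1/2) - (w:ℝ) * 1 := by ring
      _ ≤ _ := habs_lower
      _ ≤ M := hdevw
  have hwR : (15:ℝ) ≤ (w:ℝ) := by exact_mod_cast hw15
  rw [hch2] at hfinal
  nlinarith [hfinal, hM, hwR]
/-- The bounded-size complete hypergraph used in the construction. -/
def Hyp (n w : ℕ) : Finset (Finset (Fin n)) :=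
  Finset.univ.filter (fun E => E.card ≤ w)

theorem mem_Hyp {n w : ℕ} {E : Finset (Fin n)} : E ∈ Hyp n w ↔ E.card ≤ w := by
  simp [Hyp]

theorem base_low (n c w K₀ : ℕ) (hcpos : 0 < c) (hcge3 : 3 ≤ c)
    (hncw : c * w ≤ n) (hK0w : 2 * K₀ ≤ w) : (K₀ : ℝ) ≤ disc (Hyp n w) c := by
  haveI : NeZero c := ⟨by omega⟩
  haveI : Nonempty (Fin n → Fin c) := ⟨fun _ => ⟨0, hcpos⟩⟩
  refine le_disc ?_
  intro χ
  obtain ⟨i, _, hi⟩ := Finset.exists_le_card_fiber_of_mul_le_card_of_maps_to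
    (f := χ) (s := Finset.univ) (t := Finset.univ) (n := w)
    (fun a _ => mem_univ _) univ_nonempty
    (by
      rw [card_univ, card_univ, Fintype.card_fin, Fintype.card_fin]
      exact hncw)
  obtain ⟨E, hEsub, hEcard⟩ := exists_subset_card_eq hi
  have hEH : E ∈ Hyp n w := mem_Hyp.mpr (le_of_eq hEcard)
  have hfE : E.filter (fun v => χ v = i) = E := by
    refine Finset.filter_eq_self.mpr ?_
    intro v hv
    have := hEsub hv
    simp only [mem_filter] at this
    exact this.2
  have hterm := le_discCol (H := Hyp n w) (χ := χ) hEH i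
  rw [hfE, hEcard] at hterm
  refine le_trans ?_ hterm
  have hwc2 : (w:ℝ)/c ≤ (w:ℝ)/2 := by
    apply div_le_div_of_nonneg_left (Nat.cast_nonneg w) (by norm_num)
    exact_mod_cast (by omega : 2 ≤ c)
  have hK : (K₀:ℝ) ≤ (w:ℝ)/2 := by
    have h2 : ((2 * K₀ : ℕ) : ℝ) ≤ (w : ℝ) := by exact_mod_cast hK0w
    push_cast at h2
    linarith
  have habs : (w:ℝ) - (w:ℝ)/c ≤ |(w:ℝ) - (w:ℝ)/c| := le_abs_self _
  have hnn : (0:ℝ) ≤ (w:ℝ) - (w:ℝ)/c := by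
    have : (w:ℝ)/c ≤ w := div_le_self (Nat.cast_nonneg w) (by exact_mod_cast hcpos)
    linarith
  linarith

theorem base_up (n c w : ℕ) (hcpos : 0 < c) : disc (Hyp n w) c ≤ (w:ℝ) := by
  refine (disc_le_discCol (Hyp n w) c (fun _ => ⟨0, hcpos⟩)).trans
    (discCol_le (Nat.cast_nonneg w) ?_)
  intro E hE i
  have hEw : E.card ≤ w := mem_Hyp.mp hE
  have h1 : ((E.filter fun v => (fun _ => (⟨0, hcpos⟩ : Fin c)) v = i).card : ℝ) ≤ E.card := by
    exact_mod_cast Finset.card_filter_le _ _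
  have h1' : (0:ℝ) ≤ ((E.filter fun v => (fun _ => (⟨0, hcpos⟩ : Fin c)) v = i).card : ℝ) :=
    Nat.cast_nonneg _
  have h2 : (E.card:ℝ) ≤ w := by exact_mod_cast hEw
  have h3 : (0:ℝ) ≤ (E.card:ℝ)/c := div_nonneg (Nat.cast_nonneg _) (Nat.cast_nonneg _)
  have h4 : (E.card:ℝ)/c ≤ E.card := div_le_self (Nat.cast_nonneg _) (by exact_mod_cast hcpos)
  rw [abs_le]
  constructor <;> linarith

theorem prod_low (n c d w NR : ℕ) (hcpos : 0 < c) (hc3 : 3 ∣ c) (hd : 2 ≤ d)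
    (heven : Even d) (hw15 : 15 ≤ w) (hdw : d ∣ w) (hbig : 2^(d+1) * d^3 ≤ w)
    (hnpos : 0 < n) (hNRn : NR ≤ n)
    (hNR : ∀ (F : (t : ℕ) → Finset ℕ → ((Fin d → Fin t) → Fin c)) (V : Finset ℕ),
      NR ≤ V.card → ∃ W : Finset ℕ, W ⊆ V ∧ W.card = w ∧
        ∀ t ≤ d, ∀ S ⊆ W, S.card = t → ∀ S' ⊆ W, S'.card = t → F t S = F t S') :
    ((w:ℝ)^2)/6 ≤ disc (symProd (Hyp n w) d) c := by
  haveI : Nonempty ((Fin d → Fin n) → Fin c) := ⟨fun _ => ⟨0, hcpos⟩⟩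
  refine le_disc ?_
  intro ξ
  by_contra hcon
  push_neg at hcon
  set M := discCol (symProd (Hyp n w) d) c ξ with hMdef
  set F : (t : ℕ) → Finset (Fin n) → ((Fin d → Fin t) → Fin c) :=
    fun t T φ => if h : T.card = t then ξ (fun j => ((T.orderIsoOfFin h) (φ j) : Fin n))
      else (⟨0, hcpos⟩ : Fin c) with hFdef
  have hF : ∀ (T : Finset (Fin n)) (φ : Fin d → Fin (T.card)),
      F T.card T φ = ξ (fun j => ((T.orderIsoOfFin rfl) (φ j) : Fin n)) := by
    intro T φ
    rw [hFdef]
    exact dif_pos rfl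
  set e : ℕ → Fin n := fun a => if h : a < n then (⟨a, h⟩ : Fin n) else ⟨0, hnpos⟩ with hedef
  obtain ⟨W₀, hW₀sub, hW₀card, hhom₀⟩ := hNR (fun t S => F t (S.image e)) (Finset.range n)
    (by rw [card_range]; exact hNRn)
  set W : Finset (Fin n) := W₀.image e with hWdef
  have heinj : ∀ a ∈ W₀, ∀ b ∈ W₀, e a = e b → a = b := by
    intro a ha b hb hab
    have han : a < n := mem_range.mp (hW₀sub ha)
    have hbn : b < n := mem_range.mp (hW₀sub hb)
    rw [hedef] at hab
    simp only [dif_pos han, dif_pos hbn] at hab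
    exact_mod_cast congrArg Fin.val hab
  have hWcard : W.card = w := by
    rw [hWdef, Finset.card_image_of_injOn heinj, hW₀card]
  have himgval : ∀ S : Finset (Fin n), S ⊆ W →
      (S.image Fin.val) ⊆ W₀ ∧ (S.image Fin.val).card = S.card ∧
        (S.image Fin.val).image e = S := by
    intro S hS
    have hkey : ∀ x ∈ S, (x : Fin n).val ∈ W₀ ∧ e (x : Fin n).val = x := by
      intro x hx
      obtain ⟨a, haW₀, hax⟩ := Finset.mem_image.mp (hWdef ▸ hS hx)
      have han : a < n := mem_range.mp (hW₀sub haW₀)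
      have hval : (x : Fin n).val = a := by
        rw [← hax, hedef]
        simp only [dif_pos han]
      constructor
      · rw [hval]; exact haW₀
      · rw [hval, ← hax]
    refine ⟨?_, ?_, ?_⟩
    · intro a ha
      obtain ⟨x, hx, rfl⟩ := Finset.mem_image.mp ha
      exact (hkey x hx).1
    · exact Finset.card_image_of_injOn (fun a _ b _ h => Fin.val_injective h)
    · apply Finset.Subset.antisymm
      · intro y hy
        obtain ⟨a, ha, rfl⟩ := Finset.mem_image.mp hy
        obtain ⟨x, hx, rfl⟩ := Finset.mem_image.mp ha
        rw [(hkey x hx).2]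
        exact hx
      · intro x hx
        refine Finset.mem_image.mpr ⟨(x : Fin n).val, Finset.mem_image.mpr ⟨x, hx, rfl⟩, ?_⟩
        exact (hkey x hx).2
  have homog : ∀ t, t ≤ d → ∀ S, S ⊆ W → S.card = t → ∀ S', S' ⊆ W → S'.card = t →
      F t S = F t S' := by
    intro t ht S hS hScard S' hS' hS'card
    obtain ⟨hv1, hv2, hv3⟩ := himgval S hS
    obtain ⟨hv1', hv2', hv3'⟩ := himgval S' hS'
    have := hhom₀ t ht (S.image Fin.val) hv1 (by rw [hv2, hScard])
      (S'.image Fin.val) hv1' (by rw [hv2', hS'card])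
    rwa [hv3, hv3'] at this
  have hdlew : d ≤ w := Nat.le_of_dvd (by omega) hdw
  have hT0ex : ∀ t : ℕ, ∃ T : Finset (Fin n), t ≤ d → T ⊆ W ∧ T.card = t := by
    intro t
    by_cases ht : t ≤ d
    · obtain ⟨T, hT1, hT2⟩ := exists_subset_card_eq
        (show t ≤ W.card by rw [hWcard]; omega)
      exact ⟨T, fun _ => ⟨hT1, hT2⟩⟩
    · exact ⟨∅, fun h => absurd h ht⟩
  choose T0 hT0 using hT0ex
  set A : Fin c → ℕ → ℕ := fun i t => (Finset.univ.filter
    (fun φ : Fin d → Fin t => Function.Surjective φ ∧ F t (T0 t) φ = i)).card with hAdef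
  have hAzero : ∀ i t, d < t → A i t = 0 := by
    intro i t htd
    rw [hAdef]
    simp only []
    rw [Finset.card_eq_zero, Finset.filter_eq_empty_iff]
    intro φ _
    rintro ⟨hsurj, -⟩
    have := Fintype.card_le_of_surjective φ hsurj
    simp only [Fintype.card_fin] at this
    omega
  have hcount := counting n d c ξ F hF W homog T0 hT0 A (fun i t => rfl) hAzero
  have hedgecard : ∀ E : Finset (Fin n),
      ((Fintype.piFinset fun _ : Fin d => E).card) = E.card ^ d :=
    fun E => Fintype.card_piFinset_const E d
  have hdev : ∀ s, s ≤ w → ∀ i : Fin c,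
      |(↑(∑ t ∈ range (d+1), s.choose t * A i t) : ℝ) - (s:ℝ)^d / c| ≤ M := by
    intro s hs i
    obtain ⟨E, hEsub, hEcard⟩ := exists_subset_card_eq
      (show s ≤ W.card by rw [hWcard]; exact hs)
    have hEH : E ∈ Hyp n w := mem_Hyp.mpr (by rw [hEcard]; exact hs)
    have hedge : (Fintype.piFinset fun _ : Fin d => E) ∈ symProd (Hyp n w) d :=
      Finset.mem_image_of_mem _ hEH
    have hterm := le_discCol (H := symProd (Hyp n w) d) (χ := ξ) hedge i
    rw [hcount E hEsub i, hEcard] at hterm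
    have hcc : ((Fintype.piFinset fun _ : Fin d => E).card : ℝ) = (s:ℝ)^d := by
      rw [hedgecard E, hEcard]
      push_cast
      rfl
    rw [hcc] at hterm
    exact hterm
  have hsum : ∀ s, s ≤ w → ∑ i : Fin c, ∑ t ∈ range (d+1), s.choose t * A i t = s^d := by
    intro s hs
    obtain ⟨E, hEsub, hEcard⟩ := exists_subset_card_eq
      (show s ≤ W.card by rw [hWcard]; exact hs)
    have hfib := Finset.card_eq_sum_card_fiberwise
      (f := ξ) (s := Fintype.piFinset fun _ : Fin d => E) (t := Finset.univ)
      (fun x _ => mem_univ _)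
    rw [hedgecard E, hEcard] at hfib
    rw [hfib]
    refine Finset.sum_congr rfl ?_
    intro i _
    rw [← hEcard]
    exact (hcount E hEsub i).symm
  exact endgame c d w hc3 hcpos hd heven hw15 hdw hbig A M hcon hdev hsum

/-- For even `d ≥ 2` and `c = 3l`, there are hypergraphs of arbitrarily large
discrepancy with `disc(Δ^d H, c) ≥ disc(H,c)² / 6`. -/
theorem stmt3 (d l : ℕ) (hd : 2 ≤ d) (heven : Even d) (hl : 1 ≤ l) :
    ∀ K₀ : ℕ, ∃ (n : ℕ) (H : Finset (Finset (Fin n))),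
      (K₀ : ℝ) ≤ disc H (3 * l) ∧
      (1 / 6 : ℝ) * disc H (3 * l) ^ 2 ≤ disc (symProd H d) (3 * l) := by
  intro K₀
  have hcpos : 0 < 3 * l := by omega
  have hcge3 : 3 ≤ 3 * l := by omega
  have hc3 : 3 ∣ 3 * l := ⟨l, rfl⟩
  obtain ⟨NR, hNR⟩ := multiRamsey (α := ℕ) d
    (fun t => (Fin d → Fin t) → Fin (3 * l))
    (d * (3 * l) * (K₀ + 2^(d+1) * d^3 + 15))
  set B : ℕ := 2^(d+1) * d^3 with hBdef
  set w : ℕ := d * (3 * l) * (K₀ + B + 15) with hwdef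
  have hdw : d ∣ w := ⟨(3 * l) * (K₀ + B + 15), by rw [hwdef]; ring⟩
  have hdc2 : 2 ≤ d * (3 * l) := le_trans hd (Nat.le_mul_of_pos_right d (by omega))
  have hw15 : 15 ≤ w := by
    have : 2 * (K₀ + B + 15) ≤ w := Nat.mul_le_mul_right _ hdc2
    omega
  have hbig : B ≤ w := by
    have : 2 * (K₀ + B + 15) ≤ w := Nat.mul_le_mul_right _ hdc2
    omega
  have hK0w : 2 * K₀ ≤ w := by
    have : 2 * (K₀ + B + 15) ≤ w := Nat.mul_le_mul_right _ hdc2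
    omega
  set n := max NR ((3 * l) * w) with hndef
  have hncw : (3 * l) * w ≤ n := le_max_right _ _
  have hnpos : 0 < n := by
    have h1 : 0 < (3 * l) * w := by
      have : 0 < w := by omega
      positivity
    omega
  refine ⟨n, Hyp n w, ?_, ?_⟩
  · exact base_low n (3 * l) w K₀ hcpos hcge3 hncw hK0w
  · have h1 := base_low n (3 * l) w K₀ hcpos hcge3 hncw hK0w
    have h2 := base_up n (3 * l) w hcpos
    have h3 := prod_low n (3 * l) d w NR hcpos hc3 hd heven hw15 hdw hbig hnpos
      (le_max_left _ _) hNR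
    have h0 : (0:ℝ) ≤ disc (Hyp n w) (3 * l) := le_trans (Nat.cast_nonneg K₀) h1
    have hsq : disc (Hyp n w) (3 * l) ^ 2 ≤ (w:ℝ)^2 := by
      apply pow_le_pow_left₀ h0 h2
    linarith [h3, hsq]
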